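/- Fix m ∈ ℕ, v_s ∈ ℝ and α ∈ (0,1). Let v_r be the unique real number with Φ̄(v_r) = α Φ̄(v_s), and set C := φ(v_s)/φ(v_r). Then there exists K > 0, depending only on α and v_s, with the following property: for all bounded measurable functions g, s : ℝ^m → ℝ, define h(θ) := E[g(U_θ)] where U_θ has law N(θ, I_m), define r := g + αC(s − g), and define the regions S := {(u,v) ∈ ℝ^m × ℝ : v > v_s − s(u)} and R := {(u,v) ∈ ℝ^m × ℝ : v > v_r − r(u)}. Then for every θ ∈ ℝ^m, with Y distributed N((θ, −h(θ)), I_{m+1}) (a parameter point on the boundary of the hypothesis region H = {(u,v) : v ≤ −h(u)}): |P(Y ∈ R) − α · P(Y ∈ S)| ≤ K (‖g‖_∞ + ‖s‖_∞)². In particular the selective rejection probability P(Y ∈ R)/P(Y ∈ S) equals α up to an error quadratic in the magnitude of the surfaces. -/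

import Mathlib

/-!
Conditioning on the first `m` coordinates, both probabilities are averages over
`U ~ N(θ, I)` of Gaussian tails: `P(Y ∈ R) = E Φ̄(v_r - (r(U) - h(θ)))` and
`P(Y ∈ S) = E Φ̄(v_s - (s(U) - h(θ)))`. Expand `Φ̄` to first order at `v_r` and `v_s`.
The constant terms cancel because `Φ̄(v_r) = α Φ̄(v_s)`, and the linear terms cancel because
`E g(U) = h(θ)` turns `E(r(U) - h(θ))` into `αC · E(s(U) - h(θ))` while `φ(v_r) C = φ(v_s)`.
Since `φ` is 1-Lipschitz, the Taylor remainders are bounded by the squared shifts, which are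
`O((‖g‖_∞ + ‖s‖_∞)²)`. Nothing beyond `E g(U) = h(θ)` is used about the law of `U`.
-/

open MeasureTheory ProbabilityTheory Set
open scoped NNReal

/-- The standard normal density. -/
noncomputable def stdphi (t : ℝ) : ℝ :=
  (Real.sqrt (2 * Real.pi))⁻¹ * Real.exp (-t ^ 2 / 2)

/-- The standard normal upper-tail probability Φ̄. -/
noncomputable def Phibar (x : ℝ) : ℝ := ∫ t in Set.Ioi x, stdphi t

/-- The Gaussian measure `N(μ, σ² I_m)` on `ℝ^m` as a product of one-dimensional
Gaussian measures. -/
noncomputable def gaussianPi {m : ℕ} (μ : Fin m → ℝ) (v : ℝ≥0) :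
    Measure (Fin m → ℝ) :=
  Measure.pi fun i => gaussianReal (μ i) v

lemma stdphi_pos (t : ℝ) : 0 < stdphi t := by
  unfold stdphi; positivity

lemma gaussianPDFReal_zero_one : gaussianPDFReal 0 1 = stdphi := by
  funext t
  simp [gaussianPDFReal, stdphi]

lemma continuous_stdphi : Continuous stdphi := by
  unfold stdphi; fun_prop

lemma hasDerivAt_stdphi (t : ℝ) : HasDerivAt stdphi (-t * stdphi t) t := by
  have h : HasDerivAt stdphi _ t :=
    ((hasDerivAt_pow 2 t).neg.div_const 2).exp.const_mul (√(2 * Real.pi))⁻¹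
  refine h.congr_deriv ?_
  rw [stdphi]; simp only [Pi.neg_apply]; push_cast; ring

lemma abs_mul_stdphi_le_one (t : ℝ) : |t * stdphi t| ≤ 1 := by
  have hexp : t * stdphi t = (√(2 * Real.pi))⁻¹ * Real.mulExpNegMulSq (1 / 2) t := by
    rw [Real.mulExpNegSq_apply, stdphi]; ring_nf
  have hsqrt : √2 ≤ √(2 * Real.pi) := Real.sqrt_le_sqrt (by nlinarith [Real.pi_gt_three])
  rw [hexp, abs_mul, abs_of_pos (by positivity)]
  calc (√(2 * Real.pi))⁻¹ * |Real.mulExpNegMulSq (1 / 2) t| ≤ (√(2 * Real.pi))⁻¹ * √2 := by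
        gcongr
        simpa using Real.abs_mulExpNegMulSq_le (ε := 1 / 2) (x := t) (by norm_num)
    _ ≤ 1 := by
        rw [inv_mul_le_one₀ (by positivity)]; exact hsqrt

lemma lipschitzWith_stdphi : LipschitzWith 1 stdphi :=
  lipschitzWith_of_nnnorm_deriv_le (fun t => (hasDerivAt_stdphi t).differentiableAt) fun t => by
    rw [(hasDerivAt_stdphi t).deriv, ← NNReal.coe_le_coe, coe_nnnorm, neg_mul, norm_neg]
    exact abs_mul_stdphi_le_one t

lemma Phibar_eq_measureReal (x : ℝ) : Phibar x = (gaussianReal 0 1).real (Ioi x) := by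
  rw [measureReal_def, gaussianReal_apply_eq_integral 0 one_ne_zero, gaussianPDFReal_zero_one,
    ENNReal.toReal_ofReal (setIntegral_nonneg measurableSet_Ioi fun t _ => (stdphi_pos t).le)]
  rfl

lemma Phibar_nonneg (x : ℝ) : 0 ≤ Phibar x := by
  rw [Phibar_eq_measureReal]; exact measureReal_nonneg

lemma Phibar_le_one (x : ℝ) : Phibar x ≤ 1 := by
  rw [Phibar_eq_measureReal]; exact measureReal_le_one

lemma measurable_Phibar : Measurable Phibar :=
  Antitone.measurable fun x y hxy => by
    simp only [Phibar_eq_measureReal]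
    exact measureReal_mono (Ioi_subset_Ioi hxy)

lemma Phibar_sub_Phibar (a b : ℝ) : Phibar a - Phibar b = ∫ t in a..b, stdphi t := by
  have hint : Integrable stdphi := gaussianPDFReal_zero_one ▸ integrable_gaussianPDFReal 0 1
  exact intervalIntegral.integral_Ioi_sub_Ioi' hint.integrableOn hint.integrableOn

open Interval in
lemma abs_Phibar_sub_sub_le (a x : ℝ) :
    |Phibar (a - x) - Phibar a - x * stdphi a| ≤ x ^ 2 := by
  have hrepr : Phibar (a - x) - Phibar a - x * stdphi a
      = ∫ t in a - x..a, (stdphi t - stdphi a) := by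
    rw [Phibar_sub_Phibar, intervalIntegral.integral_sub
      (continuous_stdphi.intervalIntegrable _ _) intervalIntegrable_const]
    simp
  have hclose : ∀ t ∈ Ι (a - x) a, ‖stdphi t - stdphi a‖ ≤ |x| := fun t ht => by
    refine (lipschitzWith_stdphi.dist_le_mul t a).trans ?_
    rw [NNReal.coe_one, one_mul, Real.dist_eq]
    simpa [abs_sub_comm] using Set.abs_sub_right_of_mem_uIcc (Set.uIoc_subset_uIcc ht)
  rw [hrepr, ← Real.norm_eq_abs]
  refine (intervalIntegral.norm_integral_le_of_norm_le_const hclose).trans ?_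
  simp [sq]

lemma gaussianReal_Ioi (μ c : ℝ) :
    gaussianReal μ 1 (Ioi c) = ENNReal.ofReal (Phibar (c - μ)) := by
  rw [Phibar_eq_measureReal, measureReal_def, ENNReal.ofReal_toReal (measure_ne_top _ _),
    ← zero_add μ, ← gaussianReal_map_add_const, Measure.map_apply (measurable_add_const μ)
      measurableSet_Ioi, zero_add]
  congr 1
  ext t; simp [sub_lt_iff_lt_add]

lemma integrable_Phibar_comp {X : Type*} [MeasurableSpace X] (μ : Measure X)
    [IsFiniteMeasure μ] {f : X → ℝ} (hf : Measurable f) :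
    Integrable (fun u => Phibar (f u)) μ :=
  .of_bound (measurable_Phibar.comp hf).aestronglyMeasurable 1 (ae_of_all _ fun u =>
    abs_le.2 ⟨by linarith [Phibar_nonneg (f u)], Phibar_le_one _⟩)

lemma measureReal_prod_gaussianReal_lt {X : Type*} [MeasurableSpace X] (μ : Measure X)
    [IsFiniteMeasure μ] (c : ℝ) {f : X → ℝ} (hf : Measurable f) :
    ((μ.prod (gaussianReal c 1)) {p : X × ℝ | f p.1 < p.2}).toReal
      = ∫ u, Phibar (f u - c) ∂μ := by
  have hset : MeasurableSet {p : X × ℝ | f p.1 < p.2} :=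
    measurableSet_lt (hf.comp measurable_fst) measurable_snd
  rw [Measure.prod_apply hset]
  change (∫⁻ u, gaussianReal c 1 (Ioi (f u)) ∂μ).toReal = _
  simp_rw [gaussianReal_Ioi]
  rw [← ofReal_integral_eq_lintegral_ofReal (integrable_Phibar_comp μ (hf.sub_const c))
    (ae_of_all _ fun u => Phibar_nonneg _),
    ENNReal.toReal_ofReal (integral_nonneg fun u => Phibar_nonneg _)]

lemma abs_integral_Phibar_sub_le {X : Type*} [MeasurableSpace X] (μ : Measure X)
    [IsProbabilityMeasure μ] (a : ℝ) {x : X → ℝ} {M : ℝ} (hx : Measurable x)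
    (hM : ∀ u, |x u| ≤ M) :
    |∫ u, Phibar (a - x u) ∂μ - Phibar a - (∫ u, x u ∂μ) * stdphi a| ≤ M ^ 2 := by
  have hxint : Integrable x μ := .of_bound hx.aestronglyMeasurable M (ae_of_all _ hM)
  have hrepr : ∫ u, Phibar (a - x u) ∂μ - Phibar a - (∫ u, x u ∂μ) * stdphi a
      = ∫ u, (Phibar (a - x u) - Phibar a - x u * stdphi a) ∂μ := by
    have hPint : Integrable (fun u => Phibar (a - x u)) μ :=
      integrable_Phibar_comp μ (hx.const_sub a)
    have hPsub : Integrable (fun u => Phibar (a - x u) - Phibar a) μ :=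
      hPint.sub (integrable_const _)
    rw [integral_sub hPsub (hxint.mul_const _), integral_sub hPint (integrable_const _),
      integral_const, integral_mul_const]
    simp
  rw [hrepr, ← Real.norm_eq_abs]
  refine (norm_integral_le_of_norm_le_const (C := M ^ 2) (ae_of_all _ fun u => ?_)).trans
    (by simp)
  refine (abs_Phibar_sub_sub_le a (x u)).trans ?_
  rw [← sq_abs]
  exact pow_le_pow_left₀ (abs_nonneg _) (hM u) 2

lemma abs_integral_le_of_abs_le {X : Type*} [MeasurableSpace X] (μ : Measure X)
    [IsProbabilityMeasure μ] {f : X → ℝ} {M : ℝ} (hM : ∀ u, |f u| ≤ M) :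
    |∫ u, f u ∂μ| ≤ M := by
  simpa using norm_integral_le_of_norm_le_const (μ := μ) (f := f) (ae_of_all _ hM)

lemma abs_integral_Phibar_sub_mul_integral_Phibar_le {X : Type*} [MeasurableSpace X]
    (μ : Measure X) [IsProbabilityMeasure μ] {vs vr α : ℝ} (hvr : Phibar vr = α * Phibar vs)
    {xR xS : X → ℝ} (hR : Measurable xR) (hS : Measurable xS) {MR MS : ℝ}
    (hMR : ∀ u, |xR u| ≤ MR) (hMS : ∀ u, |xS u| ≤ MS)
    (hlin : stdphi vr * ∫ u, xR u ∂μ = α * (stdphi vs * ∫ u, xS u ∂μ)) :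
    |∫ u, Phibar (vr - xR u) ∂μ - α * ∫ u, Phibar (vs - xS u) ∂μ| ≤ MR ^ 2 + |α| * MS ^ 2 := by
  have eR := abs_integral_Phibar_sub_le μ vr hR hMR
  have eS := abs_integral_Phibar_sub_le μ vs hS hMS
  calc _ = |(∫ u, Phibar (vr - xR u) ∂μ - Phibar vr - (∫ u, xR u ∂μ) * stdphi vr)
          - α * (∫ u, Phibar (vs - xS u) ∂μ - Phibar vs - (∫ u, xS u ∂μ) * stdphi vs)| := by
        congr 1; linear_combination hvr + hlin
    _ ≤ MR ^ 2 + |α| * MS ^ 2 := by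
        refine (abs_sub _ _).trans ?_
        rw [abs_mul]; gcongr

lemma abs_rejection_shift_le {g s h α C Mg Ms : ℝ} (hC : 0 ≤ C) (hg : |g| ≤ Mg)
    (hs : |s| ≤ Ms) (hh : |h| ≤ Mg) :
    |g + α * C * (s - g) - h| ≤ (2 + |α| * C) * (Mg + Ms) := by
  have hsg : |s - g| ≤ Mg + Ms := (abs_sub _ _).trans (by linarith)
  calc |g + α * C * (s - g) - h| ≤ |g| + |α * C * (s - g)| + |h| :=
        (abs_sub _ _).trans (by gcongr; exact abs_add_le _ _)
    _ = |g| + |α| * C * |s - g| + |h| := by rw [abs_mul, abs_mul, abs_of_nonneg hC]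
    _ ≤ Mg + |α| * C * (Mg + Ms) + Mg := by gcongr
    _ ≤ (2 + |α| * C) * (Mg + Ms) := by nlinarith [(abs_nonneg s).trans hs]

theorem abs_measureReal_rejection_sub_le {X : Type*} [MeasurableSpace X] (μ : Measure X)
    [IsProbabilityMeasure μ] {vs vr α : ℝ} (hvr : Phibar vr = α * Phibar vs) {g s : X → ℝ}
    (hg : Measurable g) (hs : Measurable s) {Mg Ms : ℝ} (hgM : ∀ u, |g u| ≤ Mg)
    (hsM : ∀ u, |s u| ≤ Ms) :
    |((μ.prod (gaussianReal (-∫ u, g u ∂μ) 1))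
          {p : X × ℝ | vr - (g p.1 + α * (stdphi vs / stdphi vr) * (s p.1 - g p.1)) < p.2}).toReal
      - α * ((μ.prod (gaussianReal (-∫ u, g u ∂μ) 1)) {p : X × ℝ | vs - s p.1 < p.2}).toReal|
      ≤ ((2 + |α| * (stdphi vs / stdphi vr)) ^ 2 + |α|) * (Mg + Ms) ^ 2 := by
  set h := ∫ u, g u ∂μ
  set C := stdphi vs / stdphi vr
  have hC : 0 ≤ C := (div_pos (stdphi_pos vs) (stdphi_pos vr)).le
  have hh : |h| ≤ Mg := abs_integral_le_of_abs_le μ hgM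
  have hgint : Integrable g μ := .of_bound hg.aestronglyMeasurable Mg (ae_of_all _ hgM)
  have hsint : Integrable s μ := .of_bound hs.aestronglyMeasurable Ms (ae_of_all _ hsM)
  have hdiff : Integrable (fun u => α * C * (s u - g u)) μ := (hsint.sub hgint).const_mul _
  have hsum : Integrable (fun u => g u + α * C * (s u - g u)) μ := hgint.add hdiff
  have hlin : stdphi vr * ∫ u, (g u + α * C * (s u - g u) - h) ∂μ
      = α * (stdphi vs * ∫ u, (s u - h) ∂μ) := by
    rw [integral_sub hsum (integrable_const h), integral_add hgint hdiff, integral_const_mul,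
      integral_sub hsint hgint, integral_sub hsint (integrable_const h),
      ← mul_div_cancel₀ (stdphi vs) (stdphi_pos vr).ne']
    simp only [integral_const, probReal_univ, one_smul]
    ring
  have hR : ∀ u, vr - (g u + α * C * (s u - g u)) - -h = vr - (g u + α * C * (s u - g u) - h) :=
    fun u => by ring
  have hS : ∀ u, vs - s u - -h = vs - (s u - h) := fun u => by ring
  rw [measureReal_prod_gaussianReal_lt μ (-h) (f := fun u => vr - (g u + α * C * (s u - g u)))
      (by fun_prop), measureReal_prod_gaussianReal_lt μ (-h) (f := fun u => vs - s u)
      (by fun_prop)]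
  simp only [hR, hS]
  calc _ ≤ ((2 + |α| * C) * (Mg + Ms)) ^ 2 + |α| * (Mg + Ms) ^ 2 :=
        abs_integral_Phibar_sub_mul_integral_Phibar_le μ hvr (by fun_prop) (by fun_prop)
          (fun u => abs_rejection_shift_le hC (hgM u) (hsM u) hh)
          (fun u => (abs_sub _ _).trans (by linarith [hgM u, hsM u])) hlin
    _ = _ := by ring

instance isProbabilityMeasure_gaussianPi {m : ℕ} (μ : Fin m → ℝ) (v : ℝ≥0) :
    IsProbabilityMeasure (gaussianPi μ v) := by
  unfold gaussianPi; infer_instance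

theorem stmt_10_general (m : ℕ) (vs α : ℝ)
    (vr : ℝ) (hvr : Phibar vr = α * Phibar vs) :
    ∃ K : ℝ, 0 < K ∧
      ∀ g s : (Fin m → ℝ) → ℝ, Measurable g → Measurable s →
        BddAbove (Set.range fun x => |g x|) →
        BddAbove (Set.range fun x => |s x|) →
        ∀ θ : Fin m → ℝ,
          |(((gaussianPi θ 1).prod
                (gaussianReal (-(∫ x, g x ∂(gaussianPi θ 1))) 1))
              {p : (Fin m → ℝ) × ℝ |
                vr - (g p.1 + α * (stdphi vs / stdphi vr) * (s p.1 - g p.1)) < p.2}).toReal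
            - α * (((gaussianPi θ 1).prod
                (gaussianReal (-(∫ x, g x ∂(gaussianPi θ 1))) 1))
              {p : (Fin m → ℝ) × ℝ | vs - s p.1 < p.2}).toReal|
          ≤ K * ((⨆ x, |g x|) + ⨆ x, |s x|) ^ 2 := by
  have hC : 0 ≤ stdphi vs / stdphi vr := (div_pos (stdphi_pos vs) (stdphi_pos vr)).le
  refine ⟨(2 + |α| * (stdphi vs / stdphi vr)) ^ 2 + |α|, by positivity, ?_⟩
  intro g s hg hs hbg hbs θ
  exact abs_measureReal_rejection_sub_le (gaussianPi θ 1) hvr hg hs (le_ciSup hbg) (le_ciSup hbs)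

/-- Lemma 3 (unbiased selective rejection surface in the theory of nearly flat
surfaces): with `Φ̄(v_r) = αΦ̄(v_s)`, `C = φ(v_s)/φ(v_r)`, `h = E₁ g` and the
rejection surface `r = g + αC(s − g)`, along the boundary of the hypothesis region
the rejection probability of `R` equals `α` times the selection probability of `S`
up to an error quadratic in `‖g‖_∞ + ‖s‖_∞`. -/
theorem stmt_10 (m : ℕ) (vs α : ℝ) (hα : α ∈ Set.Ioo (0 : ℝ) 1)
    (vr : ℝ) (hvr : Phibar vr = α * Phibar vs) :
    ∃ K : ℝ, 0 < K ∧
      ∀ g s : (Fin m → ℝ) → ℝ, Measurable g → Measurable s →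
        BddAbove (Set.range fun x => |g x|) →
        BddAbove (Set.range fun x => |s x|) →
        ∀ θ : Fin m → ℝ,
          |(((gaussianPi θ 1).prod
                (gaussianReal (-(∫ x, g x ∂(gaussianPi θ 1))) 1))
              {p : (Fin m → ℝ) × ℝ |
                vr - (g p.1 + α * (stdphi vs / stdphi vr) * (s p.1 - g p.1)) < p.2}).toReal
            - α * (((gaussianPi θ 1).prod
                (gaussianReal (-(∫ x, g x ∂(gaussianPi θ 1))) 1))
              {p : (Fin m → ℝ) × ℝ | vs - s p.1 < p.2}).toReal|
          ≤ K * ((⨆ x, |g x|) + ⨆ x, |s x|) ^ 2 :=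
  stmt_10_general m vs α vr hvr
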